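/- arXiv:2404.10666 — 5 statements merged into one kernel-verified Lean document; each statement's English description precedes it below -/
import Mathlib

section
/- If wt takes at least two distinct values on A, the function G(z) = z·F_A'(z)/F_A(z) is strictly increasing on [0,∞) and maps [0,∞) bijectively onto [0, μ), where μ = max_{a∈A} wt(a). -/
open Finset Real

private lemma pull_z (n : ℕ) (z : ℝ) : z * ((n : ℝ) * z ^ (n - 1)) = (n : ℝ) * z ^ n := by
  cases n with
  | zero => simp
  | succ k => simp only [Nat.add_sub_cancel, pow_succ]; push_cast; ring

private lemma double_sum_id {A : Type*} [Fintype A] (w : A → ℕ) (x : ℝ) :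
    ∑ a : A, ∑ b : A, ((w a : ℝ) - (w b : ℝ)) ^ 2 * (x ^ w a * x ^ w b)
      = 2 * ((∑ a : A, (w a : ℝ) ^ 2 * x ^ w a) * (∑ a : A, x ^ w a)
        - (∑ a : A, (w a : ℝ) * x ^ w a) ^ 2) := by
  have h : ∀ a b : A, ((w a : ℝ) - (w b : ℝ)) ^ 2 * (x ^ w a * x ^ w b)
      = ((w a : ℝ)^2 * x ^ w a) * (x ^ w b)
        - 2 * (((w a:ℝ) * x ^ w a) * ((w b:ℝ) * x ^ w b))
        + (x ^ w a) * ((w b:ℝ)^2 * x ^ w b) := by intro a b; ring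
  simp only [h, Finset.sum_add_distrib, Finset.sum_sub_distrib, ← Finset.mul_sum,
    ← Finset.sum_mul]
  ring

theorem G_strictMono_bijOn {A : Type*} [Fintype A] [Nonempty A] (wt : A → ℕ)
    (htwo : ∃ a b : A, wt a ≠ wt b) (h0 : ∃ a : A, wt a = 0)
    (F : ℝ → ℝ) (hF : F = fun z => ∑ a : A, z ^ (wt a))
    (G : ℝ → ℝ) (hG : G = fun z => z * deriv F z / F z)
    (μ : ℝ) (hμ : μ = (Finset.univ.sup wt : ℕ)) :
    StrictMonoOn G (Set.Ici 0) ∧ Set.BijOn G (Set.Ici 0) (Set.Ico 0 μ) := by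
  classical
  obtain ⟨a₀, ha₀⟩ := h0
  set M : ℕ := Finset.univ.sup wt with hMdef
  obtain ⟨am, -, ham⟩ := Finset.exists_mem_eq_sup (Finset.univ : Finset A)
    Finset.univ_nonempty wt
  have hμM : μ = (M : ℝ) := hμ
  have hM1 : 1 ≤ M := by
    obtain ⟨a, b, hab⟩ := htwo
    have h1 : wt a ≤ M := Finset.le_sup (Finset.mem_univ a)
    have h2 : wt b ≤ M := Finset.le_sup (Finset.mem_univ b)
    omega
  have hμpos : (0:ℝ) < μ := by
    rw [hμM]; exact_mod_cast Nat.lt_of_lt_of_le Nat.zero_lt_one hM1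
  set S0 : ℝ → ℝ := fun z => ∑ a : A, z ^ wt a with hS0def
  set S1 : ℝ → ℝ := fun z => ∑ a : A, (wt a : ℝ) * z ^ wt a with hS1def
  have hS0pos : ∀ z ≥ (0:ℝ), 0 < S0 z := by
    intro z hz
    exact Finset.sum_pos' (fun a _ => pow_nonneg hz _)
      ⟨a₀, Finset.mem_univ _, by simp [ha₀]⟩
  have hS1nonneg : ∀ z ≥ (0:ℝ), 0 ≤ S1 z := fun z hz =>
    Finset.sum_nonneg fun a _ => mul_nonneg (Nat.cast_nonneg _) (pow_nonneg hz _)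
  have hdF : ∀ z : ℝ, HasDerivAt F (∑ a : A, (wt a : ℝ) * z ^ (wt a - 1)) z := by
    intro z
    rw [hF]
    exact HasDerivAt.fun_sum fun a _ => hasDerivAt_pow (wt a) z
  have hGeq : ∀ z : ℝ, G z = S1 z / S0 z := by
    intro z
    rw [hG]
    simp only
    rw [(hdF z).deriv, hF]
    congr 1
    rw [Finset.mul_sum]
    exact Finset.sum_congr rfl fun a _ => pull_z (wt a) z
  have hGfun : G = fun z => S1 z / S0 z := funext hGeq
  have hcS0 : Continuous S0 := continuous_finset_sum _ fun a _ => continuous_pow _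
  have hcS1 : Continuous S1 := continuous_finset_sum _ fun a _ => continuous_const.mul (continuous_pow _)
  have hGcont : ContinuousOn G (Set.Ici 0) := by
    rw [hGfun]
    exact ContinuousOn.div hcS1.continuousOn hcS0.continuousOn
      fun z hz => (hS0pos z hz).ne'
  have hdS0 : ∀ x : ℝ, HasDerivAt S0 (∑ a : A, (wt a : ℝ) * x ^ (wt a - 1)) x :=
    fun x => HasDerivAt.fun_sum fun a _ => hasDerivAt_pow _ _
  have hdS1 : ∀ x : ℝ, HasDerivAt S1 (∑ a : A, (wt a : ℝ) * ((wt a : ℝ) * x ^ (wt a - 1))) x :=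
    fun x => HasDerivAt.fun_sum fun a _ => (hasDerivAt_pow _ _).const_mul _
  have hderivGpos : ∀ x ∈ interior (Set.Ici (0:ℝ)), 0 < deriv G x := by
    rw [interior_Ici]
    intro x hx
    have hx0 : (0:ℝ) < x := hx
    have hS0x : 0 < S0 x := hS0pos x hx0.le
    have hdG : HasDerivAt G (((∑ a : A, (wt a:ℝ) * ((wt a:ℝ) * x ^ (wt a - 1))) * S0 x
        - S1 x * (∑ a : A, (wt a:ℝ) * x ^ (wt a - 1))) / (S0 x)^2) x := by
      rw [hGfun]
      exact (hdS1 x).div (hdS0 x) hS0x.ne'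
    rw [hdG.deriv]
    apply div_pos _ (pow_pos hS0x 2)
    have e1 : x * (∑ a : A, (wt a:ℝ) * ((wt a:ℝ) * x ^ (wt a - 1)))
        = ∑ a : A, (wt a:ℝ)^2 * x ^ wt a := by
      rw [Finset.mul_sum]
      refine Finset.sum_congr rfl fun a _ => ?_
      have hp := pull_z (wt a) x
      calc x * ((wt a:ℝ) * ((wt a:ℝ) * x ^ (wt a - 1)))
          = (wt a:ℝ) * (x * ((wt a:ℝ) * x ^ (wt a - 1))) := by ring
        _ = (wt a:ℝ) * ((wt a:ℝ) * x ^ wt a) := by rw [hp]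
        _ = (wt a:ℝ)^2 * x ^ wt a := by ring
    have e2 : x * (∑ a : A, (wt a:ℝ) * x ^ (wt a - 1)) = S1 x := by
      rw [Finset.mul_sum]
      exact Finset.sum_congr rfl fun a _ => pull_z (wt a) x
    have hds : 0 < ∑ a : A, ∑ b : A, ((wt a:ℝ) - (wt b:ℝ))^2 * (x ^ wt a * x ^ wt b) := by
      obtain ⟨a, b, hab⟩ := htwo
      have hnn : ∀ (i j : A), 0 ≤ ((wt i:ℝ) - (wt j:ℝ))^2 * (x ^ wt i * x ^ wt j) :=
        fun i j => mul_nonneg (sq_nonneg _)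
          (mul_nonneg (pow_nonneg hx0.le _) (pow_nonneg hx0.le _))
      refine Finset.sum_pos' (fun i _ => Finset.sum_nonneg fun j _ => hnn i j)
        ⟨a, Finset.mem_univ a, Finset.sum_pos' (fun j _ => hnn a j)
          ⟨b, Finset.mem_univ b, ?_⟩⟩
      have hne : ((wt a:ℝ) - (wt b:ℝ)) ≠ 0 := by
        simp only [sub_ne_zero]
        exact_mod_cast hab
      exact mul_pos (by positivity) (mul_pos (pow_pos hx0 _) (pow_pos hx0 _))
    have hkey : 0 < (∑ a : A, (wt a:ℝ)^2 * x ^ wt a) * S0 x - (S1 x)^2 := by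
      have := double_sum_id wt x
      rw [this] at hds
      simp only [hS0def, hS1def]
      linarith
    have hmul : x * (((∑ a : A, (wt a:ℝ) * ((wt a:ℝ) * x ^ (wt a - 1))) * S0 x
        - S1 x * (∑ a : A, (wt a:ℝ) * x ^ (wt a - 1))))
        = (∑ a : A, (wt a:ℝ)^2 * x ^ wt a) * S0 x - S1 x * S1 x := by
      calc x * (((∑ a : A, (wt a:ℝ) * ((wt a:ℝ) * x ^ (wt a - 1))) * S0 x
            - S1 x * (∑ a : A, (wt a:ℝ) * x ^ (wt a - 1))))
          = (x * (∑ a : A, (wt a:ℝ) * ((wt a:ℝ) * x ^ (wt a - 1)))) * S0 x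
            - S1 x * (x * (∑ a : A, (wt a:ℝ) * x ^ (wt a - 1))) := by ring
        _ = (∑ a : A, (wt a:ℝ)^2 * x ^ wt a) * S0 x - S1 x * S1 x := by rw [e1, e2]
    nlinarith [hkey, hmul, hx0, sq (S1 x)]
  have hmono : StrictMonoOn G (Set.Ici 0) :=
    strictMonoOn_of_deriv_pos (convex_Ici 0) hGcont hderivGpos
  have hwle : ∀ a : A, (wt a : ℝ) ≤ μ := by
    intro a
    rw [hμM]
    exact_mod_cast Finset.le_sup (Finset.mem_univ a)
  have hGlt : ∀ z ≥ (0:ℝ), G z < μ := by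
    intro z hz
    rw [hGeq, div_lt_iff₀ (hS0pos z hz)]
    calc S1 z < ∑ a : A, μ * z ^ wt a := by
          refine Finset.sum_lt_sum (fun a _ => mul_le_mul_of_nonneg_right (hwle a)
            (pow_nonneg hz _)) ⟨a₀, Finset.mem_univ _, ?_⟩
          simp [ha₀, hμpos]
      _ = μ * S0 z := by rw [Finset.mul_sum]
  have hGnonneg : ∀ z ≥ (0:ℝ), 0 ≤ G z := fun z hz => by
    rw [hGeq]
    exact div_nonneg (hS1nonneg z hz) (hS0pos z hz).le
  have hG0 : G 0 = 0 := by
    rw [hGeq]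
    have : S1 0 = 0 := Finset.sum_eq_zero fun a _ => by
      rcases Nat.eq_zero_or_pos (wt a) with h | h
      · simp [h]
      · simp [zero_pow h.ne']
    rw [this, zero_div]
  have hsurj : Set.SurjOn G (Set.Ici 0) (Set.Ico 0 μ) := by
    intro y hy
    obtain ⟨hy0, hyμ⟩ := hy
    set N : ℝ := (Fintype.card A : ℝ) with hNdef
    set z : ℝ := max 1 (N * y / (μ - y)) + 1 with hzdef
    have hz1 : (1:ℝ) ≤ z := by
      have := le_max_left 1 (N * y / (μ - y)); simp only [hzdef]; linarith
    have hz0 : (0:ℝ) < z := lt_of_lt_of_le one_pos hz1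
    have hμy : (0:ℝ) < μ - y := by linarith
    have hzgt : N * y < (μ - y) * z := by
      have h1 : N * y / (μ - y) < z := by
        have := le_max_right 1 (N * y / (μ - y)); simp only [hzdef]; linarith
      rw [div_lt_iff₀ hμy] at h1
      linarith
    have hzM : z ^ M = z ^ (M - 1) * z := by
      rw [← pow_succ]
      congr 1
      omega
    have hkey : y * S0 z < S1 z := by
      have hsum : S1 z - y * S0 z = ∑ a : A, ((wt a : ℝ) - y) * z ^ wt a := by
        simp only [hS1def, hS0def, Finset.mul_sum, ← Finset.sum_sub_distrib, sub_mul]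
      have herase : ∀ a ∈ Finset.univ.erase am,
          -(y * z ^ (M - 1)) ≤ ((wt a : ℝ) - y) * z ^ wt a := by
        intro a _
        have hynn : 0 ≤ y * z ^ (M - 1) := mul_nonneg hy0 (pow_nonneg hz0.le _)
        rcases le_or_gt y (wt a) with h | h
        · have : 0 ≤ ((wt a:ℝ) - y) * z ^ wt a :=
            mul_nonneg (by linarith) (pow_nonneg hz0.le _)
          linarith
        · have hwa : wt a < M := by
            have hlt : (wt a : ℝ) < (M:ℝ) := lt_of_lt_of_le h (by rw [← hμM]; exact hyμ.le)
            exact_mod_cast hlt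
          have hle : z ^ wt a ≤ z ^ (M - 1) :=
            pow_le_pow_right₀ hz1 (by omega)
          have h1 : (-y) * z ^ wt a ≤ ((wt a:ℝ) - y) * z ^ wt a :=
            mul_le_mul_of_nonneg_right (by linarith [show (0:ℝ) ≤ (wt a:ℝ) from Nat.cast_nonneg _]) (pow_nonneg hz0.le _)
          have h2 : (-y) * z ^ (M-1) ≤ (-y) * z ^ wt a :=
            mul_le_mul_of_nonpos_left hle (by linarith)
          calc -(y * z ^ (M-1)) = (-y) * z ^ (M-1) := by ring
            _ ≤ (-y) * z ^ wt a := h2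
            _ ≤ _ := h1
      have hcard : ((Finset.univ.erase am).card : ℝ) * (-(y * z ^ (M-1)))
          ≤ ∑ a ∈ Finset.univ.erase am, ((wt a:ℝ) - y) * z ^ wt a := by
        have := Finset.card_nsmul_le_sum (Finset.univ.erase am)
          (fun a => ((wt a:ℝ) - y) * z ^ wt a) (-(y * z ^ (M-1))) herase
        simpa [nsmul_eq_mul] using this
      have hcardle : ((Finset.univ.erase am).card : ℝ) ≤ N := by
        rw [hNdef]
        have : (Finset.univ.erase am).card ≤ Fintype.card A := by
          simpa using Finset.card_erase_le (s := (Finset.univ : Finset A)) (a := am)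
        exact_mod_cast this
      have hsplit : (∑ a : A, ((wt a : ℝ) - y) * z ^ wt a)
          = ((wt am : ℝ) - y) * z ^ wt am
            + ∑ a ∈ Finset.univ.erase am, ((wt a:ℝ) - y) * z ^ wt a := by
        exact (Finset.add_sum_erase _ _ (Finset.mem_univ am)).symm
      have hmam : ((wt am : ℝ) - y) * z ^ wt am = (μ - y) * z ^ M := by
        rw [← ham, hμM]
      have hNneg : -(N * (y * z ^ (M-1))) ≤ N * (-(y * z ^ (M-1))) := by ring_nf; linarith [le_refl (0:ℝ)]
      have hlower : (μ - y) * z ^ M - N * (y * z ^ (M-1))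
          ≤ ∑ a : A, ((wt a : ℝ) - y) * z ^ wt a := by
        rw [hsplit, hmam]
        have hynn : 0 ≤ y * z ^ (M - 1) := mul_nonneg hy0 (pow_nonneg hz0.le _)
        have : N * (-(y * z ^ (M-1))) ≤ ((Finset.univ.erase am).card : ℝ) * (-(y * z ^ (M-1))) := by
          apply mul_le_mul_of_nonpos_right hcardle
          linarith
        nlinarith [hcard]
      have hpos : 0 < (μ - y) * z ^ M - N * (y * z ^ (M-1)) := by
        rw [hzM]
        have hp : 0 < z ^ (M-1) := pow_pos hz0 _
        calc (0:ℝ) < z ^ (M-1) * ((μ - y) * z - N * y) := by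
              apply mul_pos hp; linarith
          _ = (μ - y) * (z ^ (M-1) * z) - N * (y * z ^ (M-1)) := by ring
      rw [← hsum] at hlower
      linarith
    have hyz : y < G z := by
      rw [hGeq, lt_div_iff₀ (hS0pos z hz0.le)]
      linarith
    have hsub : Set.Icc (0:ℝ) z ⊆ Set.Ici 0 := Set.Icc_subset_Ici_self
    have := intermediate_value_Icc hz0.le (hGcont.mono hsub)
    have hmem : y ∈ Set.Icc (G 0) (G z) := by
      rw [hG0]; exact ⟨hy0, hyz.le⟩
    obtain ⟨c, hc, hcy⟩ := this hmem
    exact ⟨c, hc.1, hcy⟩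
  refine ⟨hmono, ⟨fun z hz => ⟨hGnonneg z hz, hGlt z hz⟩, hmono.injOn, hsurj⟩⟩
end

section
/- The function ρ(β) = Σ_{a∈A} (q^{-β·wt(a)}/Z(β))·wt(a) is a strictly decreasing continuous bijection from ℝ onto (0, μ), where μ = max_{a∈A} wt(a). -/
open Finset Real

lemma aux_sign {q : ℝ} (hq : 1 < q) {β₁ β₂ : ℝ} (hβ : β₁ < β₂) (w₁ w₂ : ℝ) :
    0 ≤ (w₁ - w₂) * (q ^ (-(β₁ * w₁)) * q ^ (-(β₂ * w₂)) -
      q ^ (-(β₂ * w₁)) * q ^ (-(β₁ * w₂))) := by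
  have hq0 : (0:ℝ) < q := lt_trans one_pos hq
  rw [← Real.rpow_add hq0, ← Real.rpow_add hq0]
  rcases lt_trichotomy w₁ w₂ with h | h | h
  · apply mul_nonneg_of_nonpos_of_nonpos (by linarith)
    rw [sub_nonpos]
    exact Real.rpow_le_rpow_left_iff hq |>.2 (by nlinarith)
  · simp [h]
  · apply mul_nonneg (by linarith)
    rw [sub_nonneg]
    exact Real.rpow_le_rpow_left_iff hq |>.2 (by nlinarith)

lemma aux_sign_pos {q : ℝ} (hq : 1 < q) {β₁ β₂ : ℝ} (hβ : β₁ < β₂) {w₁ w₂ : ℝ}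
    (hw : w₁ ≠ w₂) :
    0 < (w₁ - w₂) * (q ^ (-(β₁ * w₁)) * q ^ (-(β₂ * w₂)) -
      q ^ (-(β₂ * w₁)) * q ^ (-(β₁ * w₂))) := by
  have hq0 : (0:ℝ) < q := lt_trans one_pos hq
  rw [← Real.rpow_add hq0, ← Real.rpow_add hq0]
  rcases lt_trichotomy w₁ w₂ with h | h | h
  · apply mul_pos_of_neg_of_neg (by linarith)
    rw [sub_neg]
    exact Real.rpow_lt_rpow_left_iff hq |>.2 (by nlinarith)
  · exact absurd h hw
  · apply mul_pos (by linarith)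
    rw [sub_pos]
    exact Real.rpow_lt_rpow_left_iff hq |>.2 (by nlinarith)

lemma aux_cross {A : Type*} [Fintype A] [Nonempty A] (wt : A → ℕ)
    (htwo : ∃ a b : A, wt a ≠ wt b) {q : ℝ} (hq : 1 < q) {β₁ β₂ : ℝ} (hβ : β₁ < β₂) :
    (∑ a : A, (wt a : ℝ) * q ^ (-(β₂ * (wt a : ℝ)))) * (∑ a : A, q ^ (-(β₁ * (wt a : ℝ))))
      < (∑ a : A, (wt a : ℝ) * q ^ (-(β₁ * (wt a : ℝ)))) * (∑ a : A, q ^ (-(β₂ * (wt a : ℝ)))) := by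
  set g : A → A → ℝ := fun a b =>
    (wt a : ℝ) * q ^ (-(β₁ * (wt a : ℝ))) * q ^ (-(β₂ * (wt b : ℝ))) -
      (wt a : ℝ) * q ^ (-(β₂ * (wt a : ℝ))) * q ^ (-(β₁ * (wt b : ℝ))) with hg
  have key : (0:ℝ) < ∑ a : A, ∑ b : A,
      (((wt a : ℝ) - (wt b : ℝ)) * (q ^ (-(β₁ * (wt a : ℝ))) * q ^ (-(β₂ * (wt b : ℝ))) -
        q ^ (-(β₂ * (wt a : ℝ))) * q ^ (-(β₁ * (wt b : ℝ))))) := by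
    rw [← Finset.sum_product']
    apply Finset.sum_pos'
    · rintro ⟨a, b⟩ -
      exact aux_sign hq hβ _ _
    · obtain ⟨a, b, hab⟩ := htwo
      exact ⟨(a, b), Finset.mem_univ _,
        aux_sign_pos hq hβ (by exact_mod_cast hab)⟩
  have hexp : ∀ a b : A,
      ((wt a : ℝ) - (wt b : ℝ)) * (q ^ (-(β₁ * (wt a : ℝ))) * q ^ (-(β₂ * (wt b : ℝ))) -
        q ^ (-(β₂ * (wt a : ℝ))) * q ^ (-(β₁ * (wt b : ℝ)))) = g a b + g b a := by
    intro a b; rw [hg]; ring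
  have hS : (0:ℝ) < ∑ a : A, ∑ b : A, g a b := by
    have h1 : ∑ a : A, ∑ b : A, (g a b + g b a)
        = (∑ a : A, ∑ b : A, g a b) + (∑ a : A, ∑ b : A, g a b) := by
      rw [← Finset.sum_add_distrib]
      simp only [Finset.sum_add_distrib]
      congr 1
      exact Finset.sum_comm
    have := key
    simp only [hexp] at this
    rw [h1] at this
    linarith
  rw [← sub_pos, Finset.sum_mul_sum, Finset.sum_mul_sum, ← Finset.sum_sub_distrib]
  refine lt_of_lt_of_eq hS ?_
  simp only [hg, Finset.sum_sub_distrib]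

theorem rho_strictAnti_bijection {A : Type*} [Fintype A] [Nonempty A] (wt : A → ℕ)
    (htwo : ∃ a b : A, wt a ≠ wt b) (h0 : ∃ a : A, wt a = 0)
    (q : ℝ) (hq : 1 < q)
    (Z : ℝ → ℝ) (hZ : Z = fun β => ∑ a : A, q ^ (-(β * (wt a : ℝ))))
    (ρ : ℝ → ℝ)
    (hρ : ρ = fun β => ∑ a : A, (q ^ (-(β * (wt a : ℝ))) / Z β) * (wt a : ℝ))
    (μ : ℝ) (hμ : μ = (Finset.univ.sup wt : ℕ)) :
    StrictAnti ρ ∧ Continuous ρ ∧ Set.BijOn ρ Set.univ (Set.Ioo 0 μ) := by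
  have hq0 : (0:ℝ) < q := lt_trans one_pos hq
  have hfpos : ∀ (β : ℝ) (a : A), 0 < q ^ (-(β * (wt a : ℝ))) :=
    fun β a => Real.rpow_pos_of_pos hq0 _
  have hSpos : ∀ β : ℝ, 0 < ∑ a : A, q ^ (-(β * (wt a : ℝ))) :=
    fun β => Finset.sum_pos (fun a _ => hfpos β a) Finset.univ_nonempty
  have hZpos : ∀ β : ℝ, 0 < Z β := fun β => by rw [hZ]; exact hSpos β
  have hρ' : ∀ β : ℝ, ρ β = (∑ a : A, (wt a : ℝ) * q ^ (-(β * (wt a : ℝ))))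
      / (∑ a : A, q ^ (-(β * (wt a : ℝ)))) := by
    intro β
    rw [hρ]
    simp only
    rw [Finset.sum_div]
    refine Finset.sum_congr rfl fun a _ => ?_
    rw [hZ]
    ring
  -- strict antitonicity
  have hanti : StrictAnti ρ := by
    intro β₁ β₂ h
    rw [hρ' β₁, hρ' β₂, div_lt_div_iff₀ (hSpos β₂) (hSpos β₁)]
    exact aux_cross wt htwo hq h
  -- continuity
  have hc : ∀ c : ℝ, Continuous fun β : ℝ => q ^ (-(β * c)) := by
    intro c
    exact continuous_const.rpow (by fun_prop) (fun x => Or.inl hq0.ne')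
  have hcont : Continuous ρ := by
    rw [hρ]
    apply continuous_finset_sum
    intro a _
    refine Continuous.mul ?_ continuous_const
    refine ((hc _).div ?_ fun β => (hZpos β).ne')
    rw [hZ]
    exact continuous_finset_sum _ fun b _ => hc _
  -- basic weight facts
  obtain ⟨az, haz⟩ := h0
  have ha0 : ∃ a : A, wt a ≠ 0 := by
    obtain ⟨x, y, hxy⟩ := htwo
    rcases eq_or_ne (wt x) 0 with h | h
    · exact ⟨y, by rw [h] at hxy; exact fun hy => hxy hy.symm⟩
    · exact ⟨x, h⟩
  obtain ⟨a₀, ha₀⟩ := ha0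
  have hwle : ∀ a : A, (wt a : ℝ) ≤ μ := by
    intro a
    rw [hμ]
    exact_mod_cast Finset.le_sup (Finset.mem_univ a)
  have hμpos : 0 < μ := by
    have h1 : (1:ℝ) ≤ (wt a₀ : ℝ) := by exact_mod_cast Nat.one_le_iff_ne_zero.2 ha₀
    linarith [hwle a₀]
  have hsum1 : ∀ β : ℝ, ∑ a : A, q ^ (-(β * (wt a : ℝ))) / Z β = 1 := by
    intro β
    rw [← Finset.sum_div, hZ, div_self (hSpos β).ne']
  -- membership
  have hmem : ∀ β : ℝ, ρ β ∈ Set.Ioo 0 μ := by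
    intro β
    constructor
    · rw [hρ]
      apply Finset.sum_pos'
      · intro a _
        exact mul_nonneg (div_nonneg (hfpos β a).le (hZpos β).le) (Nat.cast_nonneg _)
      · refine ⟨a₀, Finset.mem_univ _, mul_pos (div_pos (hfpos β a₀) (hZpos β)) ?_⟩
        exact_mod_cast Nat.pos_of_ne_zero ha₀
    · have hlt : ρ β < ∑ a : A, (q ^ (-(β * (wt a : ℝ))) / Z β) * μ := by
        rw [hρ]
        apply Finset.sum_lt_sum
        · intro a _
          exact mul_le_mul_of_nonneg_left (hwle a) (div_nonneg (hfpos β a).le (hZpos β).le)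
        · refine ⟨az, Finset.mem_univ _, ?_⟩
          apply mul_lt_mul_of_pos_left _ (div_pos (hfpos β az) (hZpos β))
          rw [haz]; exact_mod_cast hμpos
      calc ρ β < ∑ a : A, (q ^ (-(β * (wt a : ℝ))) / Z β) * μ := hlt
        _ = (∑ a : A, q ^ (-(β * (wt a : ℝ))) / Z β) * μ := by rw [Finset.sum_mul]
        _ = μ := by rw [hsum1 β, one_mul]
  -- existence of small values
  have hlt : ∀ y : ℝ, 0 < y → ∃ β : ℝ, ρ β < y := by
    intro y hy
    set C := ∑ a : A, (wt a : ℝ) with hCdef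
    have hC : 0 < C := by
      apply Finset.sum_pos'
      · intro a _; exact Nat.cast_nonneg _
      · exact ⟨a₀, Finset.mem_univ _, by exact_mod_cast Nat.pos_of_ne_zero ha₀⟩
    set ε := y / (C + 1) with hεdef
    have hε : 0 < ε := div_pos hy (by linarith)
    set β := max 1 (1 - Real.logb q ε) with hβdef
    have hβ1 : (1:ℝ) ≤ β := le_max_left _ _
    have hqβ : q ^ (-β) < ε := by
      have h1 : -β < Real.logb q ε := by
        have := le_max_right 1 (1 - Real.logb q ε)
        have h2 : 1 - Real.logb q ε ≤ β := this
        linarith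
      calc q ^ (-β) < q ^ Real.logb q ε := (Real.rpow_lt_rpow_left_iff hq).2 h1
        _ = ε := Real.rpow_logb hq0 (ne_of_gt hq) hε
    refine ⟨β, ?_⟩
    have hZ1 : (1:ℝ) ≤ ∑ a : A, q ^ (-(β * (wt a : ℝ))) := by
      have := Finset.single_le_sum (f := fun a : A => q ^ (-(β * (wt a : ℝ))))
        (fun a _ => (hfpos β a).le) (Finset.mem_univ az)
      simpa [haz] using this
    have hN0 : 0 ≤ ∑ a : A, (wt a : ℝ) * q ^ (-(β * (wt a : ℝ))) :=
      Finset.sum_nonneg fun a _ => mul_nonneg (Nat.cast_nonneg _) (hfpos β a).le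
    have hbound : ∑ a : A, (wt a : ℝ) * q ^ (-(β * (wt a : ℝ))) ≤ C * q ^ (-β) := by
      rw [hCdef, Finset.sum_mul]
      apply Finset.sum_le_sum
      intro a _
      rcases Nat.eq_zero_or_pos (wt a) with h | h
      · simp [h]
      · apply mul_le_mul_of_nonneg_left _ (Nat.cast_nonneg _)
        apply (Real.rpow_le_rpow_left_iff hq).2
        have h1 : (1:ℝ) ≤ (wt a : ℝ) := by exact_mod_cast h
        nlinarith
    have hCe : C * ε ≤ y := by
      have h2 : (C + 1) * ε = y := by
        rw [hεdef]; field_simp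
      nlinarith
    have h3 : ρ β ≤ ∑ a : A, (wt a : ℝ) * q ^ (-(β * (wt a : ℝ))) := by
      rw [hρ' β]
      exact div_le_self hN0 hZ1
    have h4 : C * q ^ (-β) < C * ε := mul_lt_mul_of_pos_left hqβ hC
    linarith
  -- existence of large values
  have hgt : ∀ y : ℝ, y < μ → ∃ β : ℝ, y < ρ β := by
    intro y hy
    obtain ⟨amax, -, hamax⟩ := Finset.exists_mem_eq_sup Finset.univ Finset.univ_nonempty wt
    have hμa : (wt amax : ℝ) = μ := by rw [hμ, hamax]
    set D := (Fintype.card A : ℝ) * μ with hDdef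
    have hD : 0 < D := mul_pos (by exact_mod_cast Fintype.card_pos) hμpos
    set ε := (μ - y) / (D + 1) with hεdef
    have hε : 0 < ε := div_pos (by linarith) (by linarith)
    set β := min (-1 : ℝ) (Real.logb q ε - 1) with hβdef
    have hβ1 : β ≤ -1 := min_le_left _ _
    have hqβ : q ^ β < ε := by
      have h1 : β < Real.logb q ε := by
        have := min_le_right (-1 : ℝ) (Real.logb q ε - 1)
        linarith
      calc q ^ β < q ^ Real.logb q ε := (Real.rpow_lt_rpow_left_iff hq).2 h1
        _ = ε := Real.rpow_logb hq0 (ne_of_gt hq) hε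
    refine ⟨β, ?_⟩
    have hZge : q ^ (-(β * μ)) ≤ Z β := by
      rw [hZ]
      have := Finset.single_le_sum (f := fun a : A => q ^ (-(β * (wt a : ℝ))))
        (fun a _ => (hfpos β a).le) (Finset.mem_univ amax)
      simpa only [hμa] using this
    have hrw : μ - ρ β = ∑ a : A, (q ^ (-(β * (wt a : ℝ))) / Z β) * (μ - (wt a : ℝ)) := by
      rw [hρ]
      simp only [mul_sub, Finset.sum_sub_distrib]
      have : ∑ a : A, (q ^ (-(β * (wt a : ℝ))) / Z β) * μ = μ := by
        rw [← Finset.sum_mul, hsum1 β, one_mul]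
      rw [this]
    have hterm : ∀ a : A, (q ^ (-(β * (wt a : ℝ))) / Z β) * (μ - (wt a : ℝ)) ≤ μ * q ^ β := by
      intro a
      have hwa : 0 ≤ μ - (wt a : ℝ) := by linarith [hwle a]
      have step1 : (q ^ (-(β * (wt a : ℝ))) / Z β) * (μ - (wt a : ℝ))
          ≤ (q ^ (-(β * (wt a : ℝ))) / q ^ (-(β * μ))) * (μ - (wt a : ℝ)) := by
        apply mul_le_mul_of_nonneg_right _ hwa
        exact div_le_div_of_nonneg_left (hfpos β a).le (Real.rpow_pos_of_pos hq0 _) hZge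
      have step2 : q ^ (-(β * (wt a : ℝ))) / q ^ (-(β * μ)) = q ^ (β * (μ - (wt a : ℝ))) := by
        rw [← Real.rpow_sub hq0]
        ring_nf
      rcases eq_or_lt_of_le (hwle a) with h | h
      · rw [h]
        simp only [sub_self, mul_zero]
        exact mul_nonneg hμpos.le (Real.rpow_pos_of_pos hq0 _).le
      · have hnat : wt a < Finset.univ.sup wt := by
          have := hwle a
          rw [hμ] at h
          exact_mod_cast h
        have h1 : (wt a : ℝ) ≤ μ - 1 := by
          rw [hμ]
          have h2 : wt a + 1 ≤ Finset.univ.sup wt := hnat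
          have h3 : ((wt a + 1 : ℕ) : ℝ) ≤ ((Finset.univ.sup wt : ℕ) : ℝ) := Nat.cast_le.2 h2
          push_cast at h3
          linarith
        have h2 : q ^ (β * (μ - (wt a : ℝ))) ≤ q ^ β := by
          apply (Real.rpow_le_rpow_left_iff hq).2
          nlinarith
        have step3 : (q ^ (β * (μ - (wt a : ℝ)))) * (μ - (wt a : ℝ)) ≤ μ * q ^ β := by
          have h3 : μ - (wt a : ℝ) ≤ μ := by
            have : (0:ℝ) ≤ (wt a : ℝ) := Nat.cast_nonneg _
            linarith
          calc (q ^ (β * (μ - (wt a : ℝ)))) * (μ - (wt a : ℝ))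
              ≤ q ^ β * μ := mul_le_mul h2 h3 hwa (Real.rpow_pos_of_pos hq0 _).le
            _ = μ * q ^ β := mul_comm _ _
        calc (q ^ (-(β * (wt a : ℝ))) / Z β) * (μ - (wt a : ℝ))
            ≤ (q ^ (-(β * (wt a : ℝ))) / q ^ (-(β * μ))) * (μ - (wt a : ℝ)) := step1
          _ = (q ^ (β * (μ - (wt a : ℝ)))) * (μ - (wt a : ℝ)) := by rw [step2]
          _ ≤ μ * q ^ β := step3
    have hsb : μ - ρ β ≤ D * q ^ β := by
      rw [hrw]
      calc ∑ a : A, (q ^ (-(β * (wt a : ℝ))) / Z β) * (μ - (wt a : ℝ))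
          ≤ ∑ _a : A, μ * q ^ β := Finset.sum_le_sum fun a _ => hterm a
        _ = (Fintype.card A : ℝ) * (μ * q ^ β) := by
            rw [Finset.sum_const, Finset.card_univ, nsmul_eq_mul]
        _ = D * q ^ β := by rw [hDdef]; ring
    have h4 : D * q ^ β < D * ε := mul_lt_mul_of_pos_left hqβ hD
    have h5 : D * ε ≤ μ - y := by
      have h2 : (D + 1) * ε = μ - y := by rw [hεdef]; field_simp
      nlinarith
    linarith
  -- assemble
  refine ⟨hanti, hcont, fun β _ => hmem β, hanti.injective.injOn, ?_⟩
  rintro y ⟨hy1, hy2⟩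
  obtain ⟨β₁, hβ₁⟩ := hlt y hy1
  obtain ⟨β₂, hβ₂⟩ := hgt y hy2
  have hb : β₂ < β₁ := by
    by_contra h
    push_neg at h
    have := hanti.antitone h
    linarith
  have hiv := intermediate_value_Icc' hb.le hcont.continuousOn
  obtain ⟨x, -, hx⟩ := hiv ⟨hβ₁.le, hβ₂.le⟩
  exact ⟨x, trivial, hx⟩
end

section
/- For any 0 < ρ < μ and ℓ ∈ ℕ with t = ρℓ ∈ ℕ, (1/ℓ)·log_q |S_t^ℓ| ≤ H_ρ, where H_ρ is the q-ary entropy of the Boltzmann distribution P_β with β chosen so that the expected weight ρ(β) = ρ. -/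
open Finset Real

theorem upper_bound_sphere {A : Type*} [Fintype A] [Nonempty A] (wt : A → ℕ)
    (htwo : ∃ a b : A, wt a ≠ wt b) (h0 : ∃ a : A, wt a = 0)
    (q : ℝ) (hq : 1 < q)
    (μ : ℝ) (hμ : μ = (Finset.univ.sup wt : ℕ))
    (ρ : ℝ) (hρ0 : 0 < ρ) (hρμ : ρ < μ)
    (ℓ t : ℕ) (hℓ : 0 < ℓ) (ht : (t : ℝ) = ρ * ℓ)
    (β : ℝ)
    (P : A → ℝ)
    (hP : P = fun a => q ^ (-(β * (wt a : ℝ))) / ∑ b : A, q ^ (-(β * (wt b : ℝ))))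
    (hβ : (∑ a : A, P a * (wt a : ℝ)) = ρ) :
    (1 / (ℓ : ℝ)) *
        Real.logb q ((Finset.univ.filter
          (fun v : Fin ℓ → A => ∑ i, wt (v i) = t)).card)
      ≤ -∑ a : A, P a * Real.logb q (P a) := by
  classical
  have hq0 : 0 < q := lt_trans one_pos hq
  set Z : ℝ := ∑ b : A, q ^ (-(β * (wt b : ℝ))) with hZ
  have hZpos : 0 < Z := Finset.sum_pos (fun b _ => Real.rpow_pos_of_pos hq0 _) univ_nonempty
  have hPpos : ∀ a, 0 < P a := by
    intro a; rw [hP]; exact div_pos (Real.rpow_pos_of_pos hq0 _) hZpos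
  have hPsum : ∑ a : A, P a = 1 := by
    rw [hP]; rw [← Finset.sum_div]; exact div_self hZpos.ne'
  -- entropy = β ρ + logb q Z
  have hlogP : ∀ a, Real.logb q (P a) = -(β * (wt a : ℝ)) - Real.logb q Z := by
    intro a
    rw [hP]
    simp only
    rw [Real.logb_div (Real.rpow_pos_of_pos hq0 _).ne' hZpos.ne',
      Real.logb_rpow hq0 hq.ne']
  have hent : -∑ a : A, P a * Real.logb q (P a) = β * ρ + Real.logb q Z := by
    have : ∑ a : A, P a * Real.logb q (P a)
        = ∑ a : A, (-(β * (P a * (wt a : ℝ))) - P a * Real.logb q Z) := by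
      apply Finset.sum_congr rfl
      intro a _
      rw [hlogP a]; ring
    rw [this, Finset.sum_sub_distrib, ← Finset.sum_mul, hPsum]
    rw [Finset.sum_neg_distrib, ← Finset.mul_sum]
    have : ∑ a : A, P a * (wt a : ℝ) = ρ := hβ
    rw [this]; ring
  -- counting bound
  set S := Finset.univ.filter (fun v : Fin ℓ → A => ∑ i, wt (v i) = t) with hS
  have hcard : (S.card : ℝ) * (q ^ (-(β * (t : ℝ))) / Z ^ ℓ) ≤ 1 := by
    have h1 : ∑ v ∈ S, ∏ i, P (v i) ≤ ∑ v : Fin ℓ → A, ∏ i, P (v i) :=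
      Finset.sum_le_sum_of_subset_of_nonneg (Finset.filter_subset _ _)
        (fun v _ _ => Finset.prod_nonneg fun i _ => (hPpos _).le)
    have h2 : ∑ v : Fin ℓ → A, ∏ i, P (v i) = 1 := by
      rw [← Fintype.sum_pow, hPsum, one_pow]
    have h3 : ∑ v ∈ S, ∏ i, P (v i) = (S.card : ℝ) * (q ^ (-(β * (t : ℝ))) / Z ^ ℓ) := by
      rw [Finset.sum_congr rfl (fun v hv => ?_), Finset.sum_const, nsmul_eq_mul]
      have hvt : ∑ i, wt (v i) = t := (Finset.mem_filter.mp hv).2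
      rw [hP]
      simp only
      rw [Finset.prod_div_distrib, Finset.prod_const, ← Real.rpow_sum_of_pos hq0,
        Finset.card_univ, Fintype.card_fin]
      congr 2
      rw [Finset.sum_neg_distrib, ← Finset.mul_sum, ← Nat.cast_sum, hvt]
    rw [h3] at h1; rw [h2] at h1; exact h1
  have hfac : 0 < q ^ (-(β * (t : ℝ))) / Z ^ ℓ :=
    div_pos (Real.rpow_pos_of_pos hq0 _) (pow_pos hZpos _)
  have hcard2 : (S.card : ℝ) ≤ q ^ (β * (t : ℝ)) * Z ^ ℓ := by
    rw [← le_div_iff₀ hfac] at hcard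
    calc (S.card : ℝ) ≤ 1 / (q ^ (-(β * (t : ℝ))) / Z ^ ℓ) := hcard
      _ = q ^ (β * (t : ℝ)) * Z ^ ℓ := by
          rw [Real.rpow_neg hq0.le]
          field_simp
  -- split on S empty
  rcases Nat.eq_zero_or_pos S.card with h0c | h0c
  · rw [h0c]
    simp only [Nat.cast_zero, Real.logb_zero, mul_zero]
    rw [neg_nonneg] at *
    have : ∀ a ∈ (univ : Finset A), P a * Real.logb q (P a) ≤ 0 := by
      intro a _
      apply mul_nonpos_of_nonneg_of_nonpos (hPpos a).le
      apply Real.logb_nonpos hq (hPpos a).le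
      have := Finset.single_le_sum (f := P) (fun b _ => (hPpos b).le) (Finset.mem_univ a)
      linarith [hPsum ▸ this]
    linarith [Finset.sum_nonpos this]
  · have hcpos : (0:ℝ) < S.card := by exact_mod_cast h0c
    have hlog : Real.logb q (S.card : ℝ) ≤ β * t + ℓ * Real.logb q Z := by
      calc Real.logb q (S.card : ℝ) ≤ Real.logb q (q ^ (β * (t : ℝ)) * Z ^ ℓ) :=
            (Real.logb_le_logb hq hcpos (by positivity)).mpr hcard2
        _ = β * t + ℓ * Real.logb q Z := by
            rw [Real.logb_mul (Real.rpow_pos_of_pos hq0 _).ne' (pow_pos hZpos _).ne',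
              Real.logb_rpow hq0 hq.ne', Real.logb_pow]
    rw [hent]
    have hℓR : (0:ℝ) < ℓ := by exact_mod_cast hℓ
    rw [div_mul_eq_mul_div, one_mul, div_le_iff₀ hℓR]
    calc Real.logb q (S.card : ℝ) ≤ β * t + ℓ * Real.logb q Z := hlog
      _ = (β * ρ + Real.logb q Z) * ℓ := by rw [ht]; ring
end

section
/- For fixed 0 < ρ < μ, the function y ↦ log_q(F_A(y)/y^ρ) on (0,∞) attains its global minimum at y = q^{-β}, where β is the unique real with ρ(β) = ρ, and the minimum value equals H_ρ = log_q(F_A(q^{-β})/q^{-βρ}). -/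
open Finset Real

theorem saddle_point_min {A : Type*} [Fintype A] [Nonempty A] (wt : A → ℕ)
    (htwo : ∃ a b : A, wt a ≠ wt b) (h0 : ∃ a : A, wt a = 0)
    (q : ℝ) (hq : 1 < q)
    (F : ℝ → ℝ) (hF : F = fun z => ∑ a : A, z ^ (wt a))
    (μ : ℝ) (hμ : μ = (Finset.univ.sup wt : ℕ))
    (ρ : ℝ) (hρ0 : 0 < ρ) (hρμ : ρ < μ)
    (β : ℝ) (hβ : q ^ (-β) * deriv F (q ^ (-β)) / F (q ^ (-β)) = ρ) :
    (∀ y : ℝ, 0 < y →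
        Real.logb q (F (q ^ (-β)) / (q ^ (-β)) ^ ρ) ≤ Real.logb q (F y / y ^ ρ))
    ∧ Real.logb q (F (q ^ (-β)) / (q ^ (-β)) ^ ρ)
        = Real.logb q (F (q ^ (-β)) / q ^ (-(β * ρ))) := by
  have hq0 : (0:ℝ) < q := lt_trans one_pos hq
  set y₀ : ℝ := q ^ (-β) with hy₀def
  have hy₀ : 0 < y₀ := Real.rpow_pos_of_pos hq0 _
  have hFpos : ∀ x : ℝ, 0 < x → 0 < F x := by
    intro x hx
    rw [hF]
    exact Finset.sum_pos (fun a _ => pow_pos hx _) Finset.univ_nonempty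
  -- derivative of F
  have hderiv : ∀ x : ℝ, x * deriv F x = ∑ a : A, (wt a : ℝ) * x ^ (wt a) := by
    intro x
    have h1 : HasDerivAt F (∑ a : A, (wt a : ℝ) * x ^ (wt a - 1)) x := by
      rw [hF]
      exact HasDerivAt.fun_sum fun a _ => hasDerivAt_pow (wt a) x
    rw [h1.deriv, Finset.mul_sum]
    refine Finset.sum_congr rfl fun a _ => ?_
    rcases Nat.eq_zero_or_pos (wt a) with h | h
    · simp [h]
    · obtain ⟨k, hk⟩ := Nat.exists_eq_succ_of_ne_zero h.ne'
      rw [hk]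
      simp [pow_succ]
      ring
  -- the critical point identity
  have hcrit : ∑ a : A, (wt a : ℝ) * y₀ ^ (wt a) = ρ * F y₀ := by
    have := hβ
    rw [div_eq_iff (hFpos y₀ hy₀).ne'] at this
    rw [← hderiv y₀, this]
  constructor
  · intro y hy
    have hFy := hFpos y hy
    have hFy₀ := hFpos y₀ hy₀
    -- key inequality via Jensen
    set L : ℝ := Real.log (y / y₀) with hL
    have hexpL : Real.exp L = y / y₀ := Real.exp_log (div_pos hy hy₀)
    have hrepr : F y = ∑ a : A, y₀ ^ (wt a) * Real.exp ((wt a : ℝ) * L) := by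
      rw [hF]
      refine Finset.sum_congr rfl fun a _ => ?_
      rw [Real.exp_nat_mul, hexpL, div_pow, mul_div_assoc']
      field_simp
    -- Jensen with weights p a = y₀^(wt a) / F y₀
    have hjensen : Real.exp (∑ a : A, (y₀ ^ (wt a) / F y₀) • ((wt a : ℝ) * L))
        ≤ ∑ a : A, (y₀ ^ (wt a) / F y₀) • Real.exp ((wt a : ℝ) * L) := by
      refine convexOn_exp.map_sum_le (fun a _ => ?_) ?_ (fun a _ => Set.mem_univ _)
      · positivity
      · rw [← Finset.sum_div, hF]
        exact div_self (Finset.sum_pos (fun a _ => pow_pos hy₀ _) Finset.univ_nonempty).ne'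
    have hsum : ∑ a : A, (y₀ ^ (wt a) / F y₀) • ((wt a : ℝ) * L) = ρ * L := by
      have : ∑ a : A, (y₀ ^ (wt a) / F y₀) • ((wt a : ℝ) * L)
          = (∑ a : A, (wt a : ℝ) * y₀ ^ (wt a)) * L / F y₀ := by
        rw [Finset.sum_mul, Finset.sum_div]
        refine Finset.sum_congr rfl fun a _ => ?_
        simp [smul_eq_mul]
        ring
      rw [this, hcrit]
      field_simp
    have hRHS : ∑ a : A, (y₀ ^ (wt a) / F y₀) • Real.exp ((wt a : ℝ) * L)
        = F y / F y₀ := by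
      rw [hrepr, Finset.sum_div]
      refine Finset.sum_congr rfl fun a _ => ?_
      simp [smul_eq_mul]
      ring
    rw [hsum, hRHS] at hjensen
    have hexp : Real.exp (ρ * L) = (y / y₀) ^ ρ := by
      rw [Real.rpow_def_of_pos (div_pos hy hy₀), ← hL, mul_comm]
    rw [hexp] at hjensen
    have hdivrpow : (y / y₀) ^ ρ = y ^ ρ / y₀ ^ ρ :=
      Real.div_rpow hy.le hy₀.le ρ
    rw [hdivrpow] at hjensen
    -- conclude F y₀ / y₀^ρ ≤ F y / y^ρ
    have hyρ : (0:ℝ) < y ^ ρ := Real.rpow_pos_of_pos hy _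
    have hy₀ρ : (0:ℝ) < y₀ ^ ρ := Real.rpow_pos_of_pos hy₀ _
    have hineq : F y₀ / y₀ ^ ρ ≤ F y / y ^ ρ := by
      rw [div_le_div_iff₀ hy₀ρ hyρ]
      have := (div_le_div_iff₀ hy₀ρ hFy₀).mp hjensen
      linarith [this]
    exact Real.logb_le_logb_of_le hq (div_pos hFy₀ hy₀ρ) hineq
  · congr 1
    rw [← Real.rpow_mul hq0.le, neg_mul]
end

section
/- The derivative of y ↦ F_A(y)/y^ρ is negative for 0 < y < q^{-β} and positive for y > q^{-β}, where β is the unique real with ρ(β) = ρ ∈ (0, μ). -/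
open Finset Real

theorem deriv_sign {A : Type*} [Fintype A] [Nonempty A] (wt : A → ℕ)
    (htwo : ∃ a b : A, wt a ≠ wt b) (h0 : ∃ a : A, wt a = 0)
    (q : ℝ) (hq : 1 < q)
    (F : ℝ → ℝ) (hF : F = fun z => ∑ a : A, z ^ (wt a))
    (μ : ℝ) (hμ : μ = (Finset.univ.sup wt : ℕ))
    (ρ : ℝ) (hρ0 : 0 < ρ) (hρμ : ρ < μ)
    (β : ℝ) (hβ : q ^ (-β) * deriv F (q ^ (-β)) / F (q ^ (-β)) = ρ) :
    (∀ y : ℝ, 0 < y → y < q ^ (-β) → deriv (fun y : ℝ => F y / y ^ ρ) y < 0)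
    ∧ (∀ y : ℝ, q ^ (-β) < y → 0 < deriv (fun y : ℝ => F y / y ^ ρ) y) := by
  have hq0 : (0:ℝ) < q := lt_trans one_pos hq
  set x₀ : ℝ := q ^ (-β) with hx₀def
  have hx₀ : 0 < x₀ := Real.rpow_pos_of_pos hq0 _
  -- derivative of F
  have hFd : ∀ y : ℝ, HasDerivAt F (∑ a : A, (wt a : ℝ) * y ^ (wt a - 1)) y := by
    intro y
    rw [hF]
    exact HasDerivAt.fun_sum fun a _ => by simpa using hasDerivAt_pow (wt a) y
  have hFpos : ∀ y : ℝ, 0 < y → 0 < F y := by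
    intro y hy
    rw [hF]
    exact Finset.sum_pos (fun a _ => pow_pos hy _) univ_nonempty
  set K : ℝ → ℝ := fun y => ∑ a : A, ((wt a : ℝ) - ρ) * y ^ ((wt a : ℝ) - ρ) with hK
  -- key identity
  have hHK : ∀ y : ℝ, 0 < y →
      y * (∑ a : A, (wt a : ℝ) * y ^ (wt a - 1)) - ρ * F y = y ^ ρ * K y := by
    intro y hy
    rw [hF, hK]
    simp only [Finset.mul_sum, ← Finset.sum_sub_distrib]
    refine Finset.sum_congr rfl fun a _ => ?_
    have h1 : y * ((wt a : ℝ) * y ^ (wt a - 1)) = (wt a : ℝ) * y ^ (wt a) := by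
      rcases Nat.eq_zero_or_pos (wt a) with h | h
      · simp [h]
      · have : y * y ^ (wt a - 1) = y ^ (wt a) := by
          rw [← pow_succ']
          congr 1
          omega
        rw [mul_left_comm, this]
    have h2 : y ^ ρ * y ^ ((wt a : ℝ) - ρ) = y ^ (wt a) := by
      rw [← Real.rpow_natCast y (wt a), ← Real.rpow_add hy]
      ring_nf
    rw [h1, ← sub_mul, mul_left_comm, h2, mul_comm]
  -- K x₀ = 0
  have hFx₀ : x₀ * deriv F x₀ = ρ * F x₀ := by
    have hne := (hFpos x₀ hx₀).ne'
    rw [div_eq_iff hne] at hβ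
    linarith [hβ]
  have hKx₀ : K x₀ = 0 := by
    have h1 := hHK x₀ hx₀
    rw [(hFd x₀).deriv] at hFx₀
    have h2 : x₀ ^ ρ * K x₀ = 0 := by rw [← h1]; linarith
    have h3 : (0:ℝ) < x₀ ^ ρ := Real.rpow_pos_of_pos hx₀ _
    exact (mul_eq_zero.1 h2).resolve_left h3.ne'
  -- strict monotonicity of K on Ioi 0
  have hn : ρ < ((Finset.univ.sup wt : ℕ) : ℝ) := by rw [← hμ]; exact hρμ
  obtain ⟨a₀, -, ha₀⟩ := Finset.exists_mem_eq_sup (univ : Finset A) univ_nonempty wt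
  have hKmono : StrictMonoOn K (Set.Ioi (0:ℝ)) := by
    intro x hx y hy hxy
    simp only [Set.mem_Ioi] at hx hy
    apply Finset.sum_lt_sum
    · intro a _
      rcases lt_trichotomy ((wt a : ℝ) - ρ) 0 with hc | hc | hc
      · have h := Real.rpow_lt_rpow_of_neg hx hxy hc
        nlinarith
      · simp [hc]
      · have h := Real.rpow_lt_rpow hx.le hxy hc
        nlinarith
    · refine ⟨a₀, Finset.mem_univ a₀, ?_⟩
      have hc : (0:ℝ) < (wt a₀ : ℝ) - ρ := by
        rw [ha₀] at hn
        linarith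
      have h := Real.rpow_lt_rpow hx.le hxy hc
      nlinarith
  -- derivative formula
  have hGder : ∀ y : ℝ, 0 < y →
      deriv (fun y : ℝ => F y / y ^ ρ) y
        = (y ^ (ρ - 1) * (y ^ ρ * K y)) / (y ^ ρ) ^ 2 := by
    intro y hy
    have hd : HasDerivAt (fun y : ℝ => y ^ ρ) (ρ * y ^ (ρ - 1)) y :=
      Real.hasDerivAt_rpow_const (Or.inl hy.ne')
    have hne : y ^ ρ ≠ 0 := (Real.rpow_pos_of_pos hy ρ).ne'
    rw [((hFd y).fun_div hd hne).deriv, ← hHK y hy]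
    have hsplit : y ^ ρ = y ^ (ρ - 1) * y := by
      have h := Real.rpow_add hy (ρ - 1) 1
      rw [Real.rpow_one] at h
      rw [← h]
      ring_nf
    rw [hsplit]
    ring
  constructor
  · intro y hy hylt
    rw [hGder y hy]
    have hKneg : K y < 0 := by
      have := hKmono (Set.mem_Ioi.2 hy) (Set.mem_Ioi.2 hx₀) hylt
      rwa [hKx₀] at this
    have c1 : (0:ℝ) < y ^ (ρ - 1) := Real.rpow_pos_of_pos hy _
    have c2 : (0:ℝ) < y ^ ρ := Real.rpow_pos_of_pos hy _
    apply div_neg_of_neg_of_pos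
    · exact mul_neg_of_pos_of_neg c1 (mul_neg_of_pos_of_neg c2 hKneg)
    · positivity
  · intro y hylt
    have hy : 0 < y := lt_trans hx₀ hylt
    rw [hGder y hy]
    have hKpos : 0 < K y := by
      have := hKmono (Set.mem_Ioi.2 hx₀) (Set.mem_Ioi.2 hy) hylt
      rwa [hKx₀] at this
    have c1 : (0:ℝ) < y ^ (ρ - 1) := Real.rpow_pos_of_pos hy _
    have c2 : (0:ℝ) < y ^ ρ := Real.rpow_pos_of_pos hy _
    apply div_pos
    · exact mul_pos c1 (mul_pos c2 hKpos)
    · positivity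
end
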